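/- arXiv:2006.01245 — 4 statements merged into one kernel-verified Lean document; each statement's English description precedes it below -/
import Mathlib

section
/- For real numbers x, a, b, there exists a bijective function f : ℝ → ℝ with |f(x) - f(b)| ≤ |f(a) - f(b)| if and only if x = b ∨ a ≠ b. -/
theorem nominal_closeness_iff (x a b : ℝ) :
    (∃ f : ℝ → ℝ, Function.Bijective f ∧ |f x - f b| ≤ |f a - f b|) ↔
      (x = b ∨ a ≠ b) := by
  constructor
  · rintro ⟨f, hf, hle⟩
    by_cases hab : a = b
    · left
      subst hab
      simp only [sub_self, abs_zero] at hle
      have : f x = f a := by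
        have := abs_nonneg (f x - f a)
        have h0 : |f x - f a| = 0 := le_antisymm hle this
        linarith [abs_eq_zero.mp h0]
      exact hf.injective this
    · exact Or.inr hab
  · rintro (hxb | hab)
    · exact ⟨id, Function.bijective_id, by simp [hxb]⟩
    · by_cases hax : a = x
      · exact ⟨id, Function.bijective_id, by simp [hax]⟩
      · set c : ℝ := b + |x - b| + 1 with hc
        have hcb' : c - b = |x - b| + 1 := by rw [hc]; ring
        have hcx : c ≠ x := by
          intro h
          have h2 := le_abs_self (x - b)
          have : c - x ≥ 1 := by rw [hc]; linarith
          rw [h] at this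
          simp at this
          linarith
        have hcb : c ≠ b := by
          intro h
          rw [h] at hcb'
          nlinarith [abs_nonneg (x - b)]
        refine ⟨Equiv.swap a c, (Equiv.swap a c).bijective, ?_⟩
        rw [Equiv.swap_apply_of_ne_of_ne (Ne.symm hax) (Ne.symm hcx),
            Equiv.swap_apply_of_ne_of_ne (Ne.symm hab) (Ne.symm hcb),
            Equiv.swap_apply_left]
        calc |x - b| ≤ |x - b| + 1 := by linarith
          _ = c - b := hcb'.symm
          _ ≤ |c - b| := le_abs_self _
end

section
/- If x < a and x < b, or if x > a and x > b (with x ≠ a), then there exists a strictly increasing function f : ℝ → ℝ such that |f(x) - f(b)| > |f(a) - f(b)|. -/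
theorem not_between_implies_far (x a b : ℝ)
    (h : (x < a ∧ x < b) ∨ (x > a ∧ x > b)) (hxa : x ≠ a) :
    ∃ f : ℝ → ℝ, StrictMono f ∧ |f x - f b| > |f a - f b| := by
  have hexp1 : (2:ℝ) < Real.exp 1 := by
    have := Real.exp_one_gt_d9; linarith
  rcases h with ⟨hxa', hxb⟩ | ⟨hxa', hxb⟩
  · rcases le_or_gt a b with hab | hab
    · refine ⟨id, strictMono_id, ?_⟩
      simp only [id]
      rw [abs_of_neg (by linarith), abs_of_nonpos (by linarith)]
      linarith
    · -- x < b < a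
      set k : ℝ := 1 / (b - x) with hkdef
      have hk : 0 < k := by
        apply one_div_pos.mpr; linarith
      have hkbx : k * (b - x) = 1 := by
        rw [hkdef, one_div, inv_mul_cancel₀ (sub_ne_zero_of_ne (ne_of_gt hxb))]
      refine ⟨fun t => -Real.exp (-(k * t)), ?_, ?_⟩
      · intro s t hst
        simp only [neg_lt_neg_iff, Real.exp_lt_exp, neg_lt_neg_iff]
        exact mul_lt_mul_of_pos_left hst hk
      · have hxeq : Real.exp (-(k * x)) = Real.exp (-(k * b)) * Real.exp 1 := by
          rw [show -(k * x) = -(k * b) + 1 by linear_combination hkbx, Real.exp_add]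
        have hab' : Real.exp (-(k * a)) < Real.exp (-(k * b)) := by
          apply Real.exp_lt_exp.mpr; nlinarith
        have hxb' : Real.exp (-(k * b)) < Real.exp (-(k * x)) := by
          apply Real.exp_lt_exp.mpr; nlinarith
        have hpa : 0 < Real.exp (-(k * a)) := Real.exp_pos _
        have hpb : 0 < Real.exp (-(k * b)) := Real.exp_pos _
        simp only
        rw [abs_of_neg (by linarith), abs_of_nonneg (by linarith)]
        nlinarith
  · rcases le_or_gt b a with hab | hab
    · refine ⟨id, strictMono_id, ?_⟩
      simp only [id]
      rw [abs_of_pos (by linarith), abs_of_nonneg (by linarith)]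
      linarith
    · -- a < b < x
      set k : ℝ := 1 / (x - b) with hkdef
      have hk : 0 < k := by
        apply one_div_pos.mpr; linarith
      have hkbx : k * (x - b) = 1 := by
        rw [hkdef, one_div, inv_mul_cancel₀ (sub_ne_zero_of_ne (ne_of_gt hxb))]
      refine ⟨fun t => Real.exp (k * t), ?_, ?_⟩
      · intro s t hst
        simp only [Real.exp_lt_exp]
        exact mul_lt_mul_of_pos_left hst hk
      · have hxeq : Real.exp (k * x) = Real.exp (k * b) * Real.exp 1 := by
          rw [show k * x = k * b + 1 by linear_combination hkbx, Real.exp_add]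
        have hab' : Real.exp (k * a) < Real.exp (k * b) := by
          apply Real.exp_lt_exp.mpr; nlinarith
        have hxb' : Real.exp (k * b) < Real.exp (k * x) := by
          apply Real.exp_lt_exp.mpr; nlinarith
        have hpa : 0 < Real.exp (k * a) := Real.exp_pos _
        have hpb : 0 < Real.exp (k * b) := Real.exp_pos _
        simp only
        rw [abs_of_pos (by linarith), abs_of_neg (by linarith)]
        nlinarith
end

section
/- Let g : D → C with C totally ordered and all fibers nonempty. Define CEM^ORD(s,g) = (Σ_d prox(s(d), g(d))) / (Σ_d prox(g(d), g(d))) where prox(a,b) = -log(P_{x∼g}(x between a and b, counting half of class a)). If s' differs from s on at least one item, and for every item d either s'(d) = s(d) or s(d) > s'(d) ≥ g(d) (s' strictly closer from above), then CEM^ORD(s', g) > CEM^ORD(s, g). -/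
/-- Informational proximity between a predicted class `a` and a gold class `b`,
based on the gold distribution `g`: `-log` of the fraction of items whose gold
class lies between `a` and `b` (counting half of class `a`). -/
noncomputable def prox {D C : Type} [Fintype D] [LinearOrder C]
    (g : D → C) (a b : C) : ℝ :=
  -Real.log
    ((((Finset.univ.filter (fun d : D =>
          ((a ≤ g d ∧ g d ≤ b) ∨ (b ≤ g d ∧ g d ≤ a)) ∧ g d ≠ a)).card : ℝ) +
        ((Finset.univ.filter (fun d : D => g d = a)).card : ℝ) / 2) /
      (Fintype.card D : ℝ))

/-- Closeness Evaluation Measure at ordinal scale. -/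
noncomputable def CEM {D C : Type} [Fintype D] [LinearOrder C]
    (s g : D → C) : ℝ :=
  (∑ d, prox g (s d) (g d)) / (∑ d, prox g (g d) (g d))

lemma filter_eq_of_le {D C : Type} [Fintype D] [LinearOrder C]
    (g : D → C) {a b : C} (h : b ≤ a) :
    Finset.univ.filter (fun d : D =>
        ((a ≤ g d ∧ g d ≤ b) ∨ (b ≤ g d ∧ g d ≤ a)) ∧ g d ≠ a) =
      Finset.univ.filter (fun d : D => b ≤ g d ∧ g d < a) := by
  ext d
  simp only [Finset.mem_filter, Finset.mem_univ, true_and]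
  constructor
  · rintro ⟨h1 | h1, h2⟩
    · exact absurd (le_antisymm (h1.2.trans h) h1.1) h2
    · exact ⟨h1.1, lt_of_le_of_ne h1.2 h2⟩
  · rintro ⟨h1, h2⟩
    exact ⟨Or.inr ⟨h1, h2.le⟩, h2.ne⟩

lemma prox_lt {D C : Type} [Fintype D] [LinearOrder C] [Nonempty D]
    (g : D → C) (hfibers : ∀ c : C, ∃ d : D, g d = c)
    {a a' b : C} (h1 : b ≤ a') (h2 : a' < a) :
    prox g a b < prox g a' b := by
  classical
  have hcd : (0 : ℝ) < (Fintype.card D : ℝ) := by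
    exact_mod_cast Fintype.card_pos
  set A := (Finset.univ.filter (fun d : D => b ≤ g d ∧ g d < a)).card with hA
  set A' := (Finset.univ.filter (fun d : D => b ≤ g d ∧ g d < a')).card with hA'
  set Fa := (Finset.univ.filter (fun d : D => g d = a)).card with hFa
  set Fa' := (Finset.univ.filter (fun d : D => g d = a')).card with hFa'
  have hFa'1 : 1 ≤ Fa' := by
    obtain ⟨d, hd⟩ := hfibers a'
    exact Finset.card_pos.mpr ⟨d, by simp [hFa', hd]⟩
  -- A' + Fa' ≤ A
  have hAA : A' + Fa' ≤ A := by
    rw [← Finset.card_union_of_disjoint]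
    · apply Finset.card_le_card
      intro d hd
      simp only [Finset.mem_union, Finset.mem_filter, Finset.mem_univ, true_and] at hd ⊢
      rcases hd with ⟨hb, hlt⟩ | he
      · exact ⟨hb, hlt.trans h2⟩
      · exact ⟨he ▸ h1, he ▸ h2⟩
    · simp only [Finset.disjoint_left, Finset.mem_filter, Finset.mem_univ, true_and]
      rintro d ⟨_, hlt⟩ he
      exact absurd he hlt.ne
  -- A + Fa ≤ card D
  have hAD : A + Fa ≤ Fintype.card D := by
    rw [← Finset.card_union_of_disjoint]
    · exact Finset.card_le_univ _
    · simp only [Finset.disjoint_left, Finset.mem_filter, Finset.mem_univ, true_and]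
      rintro d ⟨_, hlt⟩ he
      exact absurd he hlt.ne
  unfold prox
  rw [filter_eq_of_le g (h1.trans h2.le), filter_eq_of_le g h1]
  rw [← hA, ← hA', ← hFa, ← hFa']
  have hnum : (A' : ℝ) + (Fa' : ℝ) / 2 < (A : ℝ) + (Fa : ℝ) / 2 := by
    have h3 : ((A' : ℝ) + (Fa' : ℝ)) ≤ (A : ℝ) := by exact_mod_cast hAA
    have h4 : (Fa' : ℝ) / 2 < (Fa' : ℝ) := by
      have : (1 : ℝ) ≤ (Fa' : ℝ) := by exact_mod_cast hFa'1
      linarith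
    have h5 : (0 : ℝ) ≤ (Fa : ℝ) / 2 := by positivity
    linarith
  have hpos : (0 : ℝ) < (A' : ℝ) + (Fa' : ℝ) / 2 := by
    have : (1 : ℝ) ≤ (Fa' : ℝ) := by exact_mod_cast hFa'1
    have : (0 : ℝ) ≤ (A' : ℝ) := by positivity
    linarith [(show (1:ℝ) ≤ (Fa' : ℝ) by exact_mod_cast hFa'1)]
  have hlog : Real.log (((A' : ℝ) + (Fa' : ℝ) / 2) / (Fintype.card D : ℝ)) <
      Real.log (((A : ℝ) + (Fa : ℝ) / 2) / (Fintype.card D : ℝ)) := by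
    apply Real.log_lt_log
    · positivity
    · gcongr
  linarith

lemma prox_self_pos {D C : Type} [Fintype D] [LinearOrder C] [Nonempty D]
    (g : D → C) (hfibers : ∀ c : C, ∃ d : D, g d = c) (c : C) :
    0 < prox g c c := by
  have hcd : (0 : ℝ) < (Fintype.card D : ℝ) := by exact_mod_cast Fintype.card_pos
  have hempty : Finset.univ.filter (fun d : D =>
      ((c ≤ g d ∧ g d ≤ c) ∨ (c ≤ g d ∧ g d ≤ c)) ∧ g d ≠ c) = ∅ := by
    apply Finset.filter_false_of_mem
    rintro d _ ⟨h1 | h1, h2⟩ <;> exact h2 (le_antisymm h1.2 h1.1)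
  set Fc := (Finset.univ.filter (fun d : D => g d = c)).card with hFc
  have hFc1 : 1 ≤ Fc := by
    obtain ⟨d, hd⟩ := hfibers c
    exact Finset.card_pos.mpr ⟨d, by simp [hFc, hd]⟩
  have hFcD : Fc ≤ Fintype.card D := Finset.card_le_univ _
  unfold prox
  rw [hempty]
  simp only [Finset.card_empty, Nat.cast_zero, zero_add]
  have h1 : (0 : ℝ) < (Fc : ℝ) / 2 / (Fintype.card D : ℝ) := by
    have : (1 : ℝ) ≤ (Fc : ℝ) := by exact_mod_cast hFc1
    positivity
  have h2 : (Fc : ℝ) / 2 / (Fintype.card D : ℝ) < 1 := by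
    rw [div_lt_one hcd]
    have : (Fc : ℝ) ≤ (Fintype.card D : ℝ) := by exact_mod_cast hFcD
    linarith
  have := Real.log_neg h1 h2
  linarith

theorem cem_ordinal_monotonicity
    {D C : Type} [Fintype D] [LinearOrder C] [Nonempty D]
    (g s s' : D → C)
    (hfibers : ∀ c : C, ∃ d : D, g d = c)
    (hdiff : ∃ d : D, s' d ≠ s d)
    (hcloser : ∀ d : D, s' d = s d ∨ (g d ≤ s' d ∧ s' d < s d)) :
    CEM s' g > CEM s g := by
  have hden : (0 : ℝ) < ∑ d, prox g (g d) (g d) := by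
    apply Finset.sum_pos
    · intro d _
      exact prox_self_pos g hfibers (g d)
    · exact Finset.univ_nonempty
  have hnum : (∑ d, prox g (s d) (g d)) < ∑ d, prox g (s' d) (g d) := by
    apply Finset.sum_lt_sum
    · intro d _
      rcases hcloser d with h | ⟨h1, h2⟩
      · rw [h]
      · exact (prox_lt g hfibers h1 h2).le
    · obtain ⟨d, hd⟩ := hdiff
      refine ⟨d, Finset.mem_univ d, ?_⟩
      rcases hcloser d with h | ⟨h1, h2⟩
      · exact absurd h hd
      · exact prox_lt g hfibers h1 h2
  unfold CEM
  exact div_lt_div_of_pos_right hnum hden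
end

section
/- CEM^ORD is ordinal invariant: for any strictly increasing relabeling f of the ordered classes, CEM^ORD(f∘s, f∘g) = CEM^ORD(s, g). -/
theorem prox_comp {D C C' : Type} [Fintype D] [LinearOrder C] [LinearOrder C']
    (g : D → C) (f : C → C') (hf : StrictMono f) (a b : C) :
    prox (f ∘ g) (f a) (f b) = prox g a b := by
  simp only [prox, Function.comp, hf.le_iff_le, ne_eq, hf.injective.eq_iff]

theorem cem_ordinal_invariance
    {D C C' : Type} [Fintype D] [LinearOrder C] [LinearOrder C']
    (s g : D → C) (f : C → C') (hf : StrictMono f) :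
    CEM (f ∘ s) (f ∘ g) = CEM s g := by
  unfold CEM
  simp only [Function.comp]
  congr 1 <;> exact Finset.sum_congr rfl fun d _ => prox_comp g f hf _ _
end
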